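/- arXiv:2410.06610 — 3 statements merged into one kernel-verified Lean document; each statement's English description precedes it below -/
import Mathlib

section
/- Applying the projection Π₂ ⊗ Π₂ with Π₂ = |0⟩⟨0| + |1⟩⟨1| to the d-dimensional Werner state W^(d)(v) and normalizing yields the two-qubit Werner state W^(2)(v') with v' = 3(d−1)v / [(d+1)(1−v) + 3(d−1)v]. -/
/-!
Compressing to the span of `|0⟩, |1⟩` sends the identity and the swap in dimension `d` to the
identity and the swap in dimension `2`, hence `Π±` to `Π±`. So the filtered state is
`a Π₊ + b Π₋` with the `d`-dimensional weights `a = v/n₊`, `b = (1-v)/n₋`; its trace is `3a + b`,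
and after normalizing it is the two-qubit Werner state with `v' = 3a/(3a + b)`.
-/

open Matrix

noncomputable section

/-- The swap operator `V` on `ℂ^d ⊗ ℂ^d`. -/
def swapOp (d : ℕ) : Matrix (Fin d × Fin d) (Fin d × Fin d) ℂ :=
  fun p q => if p.1 = q.2 ∧ p.2 = q.1 then 1 else 0

/-- `Π₊ = (I + V)/2`. -/
def piPlus (d : ℕ) : Matrix (Fin d × Fin d) (Fin d × Fin d) ℂ :=
  (1 / 2 : ℂ) • (1 + swapOp d)

/-- `Π₋ = (I - V)/2`. -/
def piMinus (d : ℕ) : Matrix (Fin d × Fin d) (Fin d × Fin d) ℂ :=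
  (1 / 2 : ℂ) • (1 - swapOp d)

/-- The Werner state `W^(d)(v) = (v/n₊) Π₊ + ((1-v)/n₋) Π₋` with `n± = d(d±1)/2`. -/
def werner (d : ℕ) (v : ℝ) : Matrix (Fin d × Fin d) (Fin d × Fin d) ℂ :=
  ((v / ((d : ℝ) * ((d : ℝ) + 1) / 2) : ℝ) : ℂ) • piPlus d +
    (((1 - v) / ((d : ℝ) * ((d : ℝ) - 1) / 2) : ℝ) : ℂ) • piMinus d

/-- The compression of a two-qudit operator onto the two-qubit subspace
`span{|0⟩,|1⟩} ⊗ span{|0⟩,|1⟩}` (the image of `Π₂ ⊗ Π₂`, identified with `ℂ²⊗ℂ²`). -/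
def qubitCompress {d : ℕ} (hd : 2 ≤ d) (M : Matrix (Fin d × Fin d) (Fin d × Fin d) ℂ) :
    Matrix (Fin 2 × Fin 2) (Fin 2 × Fin 2) ℂ :=
  fun a b =>
    M (Fin.castLE hd a.1, Fin.castLE hd a.2) (Fin.castLE hd b.1, Fin.castLE hd b.2)

lemma trace_swapOp (d : ℕ) : trace (swapOp d) = d := by
  have hdiag : ∀ i j : Fin d, (i = j ∧ j = i) ↔ i = j :=
    fun _ _ => ⟨And.left, fun h => ⟨h, h.symm⟩⟩
  simp only [trace, diag_apply, swapOp, hdiag, Fintype.sum_prod_type, Finset.sum_ite_eq,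
    Finset.mem_univ, if_true]
  simp

lemma trace_piPlus (d : ℕ) : trace (piPlus d) = d * (d + 1) / 2 := by
  simp only [piPlus, trace_smul, trace_add, trace_one, trace_swapOp, Fintype.card_prod,
    Fintype.card_fin]
  push_cast; ring

lemma trace_piMinus (d : ℕ) : trace (piMinus d) = d * (d - 1) / 2 := by
  simp only [piMinus, trace_smul, trace_sub, trace_one, trace_swapOp, Fintype.card_prod,
    Fintype.card_fin]
  push_cast; ring

section QubitCompress

variable {d : ℕ} (hd : 2 ≤ d)

lemma qubitCompress_swapOp : qubitCompress hd (swapOp d) = swapOp 2 := by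
  ext p q
  simp [qubitCompress, swapOp, Fin.castLE_inj]

lemma qubitCompress_one : qubitCompress hd 1 = 1 :=
  submatrix_one _ (Prod.map_injective.2 ⟨Fin.castLE_injective hd, Fin.castLE_injective hd⟩)

lemma qubitCompress_add  (M N : Matrix (Fin d × Fin d) (Fin d × Fin d) ℂ) :
    qubitCompress hd (M + N) = qubitCompress hd M + qubitCompress hd N := rfl

lemma qubitCompress_sub  (M N : Matrix (Fin d × Fin d) (Fin d × Fin d) ℂ) :
    qubitCompress hd (M - N) = qubitCompress hd M - qubitCompress hd N := rfl

lemma qubitCompress_smul  (c : ℂ) (M : Matrix (Fin d × Fin d) (Fin d × Fin d) ℂ) :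
    qubitCompress hd (c • M) = c • qubitCompress hd M := rfl

lemma qubitCompress_piPlus : qubitCompress hd (piPlus d) = piPlus 2 := by
  rw [piPlus, qubitCompress_smul, qubitCompress_add, qubitCompress_one, qubitCompress_swapOp,
    piPlus]

lemma qubitCompress_piMinus : qubitCompress hd (piMinus d) = piMinus 2 := by
  rw [piMinus, qubitCompress_smul, qubitCompress_sub, qubitCompress_one, qubitCompress_swapOp,
    piMinus]

end QubitCompress

lemma trace_smul_piPlus_add_smul_piMinus_two (a b : ℝ) :
    trace ((a : ℂ) • piPlus 2 + (b : ℂ) • piMinus 2) = ((3 * a + b : ℝ) : ℂ) := by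
  rw [trace_add, trace_smul, trace_smul, trace_piPlus, trace_piMinus, smul_eq_mul, smul_eq_mul]
  push_cast
  ring

lemma werner_two (w : ℝ) :
    werner 2 w = ((w / 3 : ℝ) : ℂ) • piPlus 2 + ((1 - w : ℝ) : ℂ) • piMinus 2 := by
  norm_num [werner]

lemma inv_trace_smul_eq_werner_two (a b : ℝ) (hab : 3 * a + b ≠ 0) :
    (trace ((a : ℂ) • piPlus 2 + (b : ℂ) • piMinus 2))⁻¹ •
        ((a : ℂ) • piPlus 2 + (b : ℂ) • piMinus 2) =
      werner 2 (3 * a / (3 * a + b)) := by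
  have hplus : (3 * a + b)⁻¹ * a = 3 * a / (3 * a + b) / 3 := by field_simp
  have hminus : (3 * a + b)⁻¹ * b = 1 - 3 * a / (3 * a + b) := by field_simp; ring
  rw [trace_smul_piPlus_add_smul_piMinus_two, werner_two, smul_add, smul_smul, smul_smul,
    ← Complex.ofReal_inv, ← Complex.ofReal_mul, ← Complex.ofReal_mul, hplus, hminus]

section WernerWeights

variable {r v : ℝ}

lemma werner_weight_sum (hr : 2 ≤ r) :
    3 * (v / (r * (r + 1) / 2)) + (1 - v) / (r * (r - 1) / 2) =
      2 * ((r + 1) * (1 - v) + 3 * (r - 1) * v) / (r * (r + 1) * (r - 1)) := by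
  have : r - 1 ≠ 0 := by linarith
  have : r + 1 ≠ 0 := by linarith
  have : r ≠ 0 := by linarith
  field_simp
  ring

lemma werner_weight_sum_pos (hr : 2 ≤ r) (hv : 0 ≤ v) :
    0 < 3 * (v / (r * (r + 1) / 2)) + (1 - v) / (r * (r - 1) / 2) := by
  rw [werner_weight_sum hr]
  have hD : 0 < (r + 1) * (1 - v) + 3 * (r - 1) * v := by nlinarith
  have hr1 : 0 < r - 1 := by linarith
  positivity

lemma werner_weight_ratio (hr : 2 ≤ r) (hv : 0 ≤ v) :
    3 * (v / (r * (r + 1) / 2)) / (3 * (v / (r * (r + 1) / 2)) + (1 - v) / (r * (r - 1) / 2)) =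
      3 * (r - 1) * v / ((r + 1) * (1 - v) + 3 * (r - 1) * v) := by
  have hD : 0 < (r + 1) * (1 - v) + 3 * (r - 1) * v := by nlinarith
  have : r - 1 ≠ 0 := by linarith
  have : r + 1 ≠ 0 := by linarith
  have : r ≠ 0 := by linarith
  rw [werner_weight_sum hr]
  field_simp

end WernerWeights

/-- Applying the local projection `Π₂ ⊗ Π₂` (with `Π₂ = |0⟩⟨0| + |1⟩⟨1|`) to `W^(d)(v)`
and normalizing by the trace yields the two-qubit Werner state `W^(2)(v')` with
`v' = 3(d-1)v / [(d+1)(1-v) + 3(d-1)v]`. -/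
theorem filtered_werner_is_two_qubit_werner (d : ℕ) (hd : 2 ≤ d) (v : ℝ)
    (hv : v ∈ Set.Icc (0 : ℝ) 1) :
    Matrix.trace (qubitCompress hd (werner d v)) ≠ 0 ∧
      (Matrix.trace (qubitCompress hd (werner d v)))⁻¹ • qubitCompress hd (werner d v) =
        werner 2 (3 * ((d : ℝ) - 1) * v /
          (((d : ℝ) + 1) * (1 - v) + 3 * ((d : ℝ) - 1) * v)) := by
  have hr : (2 : ℝ) ≤ d := by exact_mod_cast hd
  have hsum := werner_weight_sum_pos hr hv.1
  rw [werner, qubitCompress_add, qubitCompress_smul, qubitCompress_smul, qubitCompress_piPlus,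
    qubitCompress_piMinus, inv_trace_smul_eq_werner_two _ _ hsum.ne', werner_weight_ratio hr hv.1,
    trace_smul_piPlus_add_smul_piMinus_two]
  exact ⟨Complex.ofReal_ne_zero.2 hsum.ne', rfl⟩
end
end

section
/- If a two-qubit state ρ has fully-entangled fraction F₂(ρ) > 1/2, then for every integer d > 2 the embedding of ρ into C^d ⊗ C^d (padding with zeros) has fully-entangled fraction F_d > 1/d. -/
open Matrix Kronecker ComplexOrder

noncomputable section

/-- The maximally entangled vector `|Φ_d⟩ = (1/√d) ∑ᵢ |i⟩|i⟩`. -/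
def phiME (d : ℕ) : Fin d × Fin d → ℂ :=
  fun p => if p.1 = p.2 then ((1 / Real.sqrt d : ℝ) : ℂ) else 0

/-- The fully-entangled fraction
`F_d(ρ) = max_U ⟨Φ_d| (I ⊗ U)† ρ (I ⊗ U) |Φ_d⟩` over `d × d` unitaries `U`. -/
def fef (d : ℕ) (ρ : Matrix (Fin d × Fin d) (Fin d × Fin d) ℂ) : ℝ :=
  sSup { x : ℝ | ∃ U ∈ Matrix.unitaryGroup (Fin d) ℂ,
    x = (star (phiME d) ⬝ᵥ
      ((((1 : Matrix (Fin d) (Fin d) ℂ) ⊗ₖ U)ᴴ * ρ *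
        ((1 : Matrix (Fin d) (Fin d) ℂ) ⊗ₖ U)).mulVec (phiME d))).re }

/-- Embedding of a two-qubit operator into `ℂ^d ⊗ ℂ^d` (padding with zeros), identifying
the qubit basis `{|0⟩, |1⟩}` with the first two basis vectors of `ℂ^d` on each side. -/
def embedQubit (d : ℕ) (ρ : Matrix (Fin 2 × Fin 2) (Fin 2 × Fin 2) ℂ) :
    Matrix (Fin d × Fin d) (Fin d × Fin d) ℂ :=
  fun p q =>
    if h : p.1.val < 2 ∧ p.2.val < 2 ∧ q.1.val < 2 ∧ q.2.val < 2 then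
      ρ (⟨p.1.val, h.1⟩, ⟨p.2.val, h.2.1⟩) (⟨q.1.val, h.2.2.1⟩, ⟨q.2.val, h.2.2.2⟩)
    else 0

/-! A unitary `U` on `ℂ²` with overlap above `1/2` extends to the unitary `U ⊕ I` on `ℂ^d`.
Since `(I ⊗ U)|Φ_d⟩ = vec U / √d`, the overlap `⟨Φ_d|(I ⊗ U)† σ (I ⊗ U)|Φ_d⟩` equals
`⟨vec U|σ|vec U⟩ / d`. For `σ` the padded `ρ` only the qubit block of `vec (U ⊕ I)`, which is
`vec U`, contributes, so the overlap of `U ⊕ I` on `ℂ^d` is `2/d` times that of `U` on `ℂ²`,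
hence above `1/d`. The supremum defining `F_d` is finite because unitary entries are bounded
by `1`. -/

def maxEntOverlap (d : ℕ) (σ : Matrix (Fin d × Fin d) (Fin d × Fin d) ℂ)
    (U : Matrix (Fin d) (Fin d) ℂ) : ℝ :=
  (star (phiME d) ⬝ᵥ (((1 : Matrix (Fin d) (Fin d) ℂ) ⊗ₖ U)ᴴ * σ *
    ((1 : Matrix (Fin d) (Fin d) ℂ) ⊗ₖ U)) *ᵥ phiME d).re

theorem phiME_eq_smul_vec_one (d : ℕ) :
    phiME d = (1 / Real.sqrt d) • vec (1 : Matrix (Fin d) (Fin d) ℂ) := by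
  ext p
  simp [phiME, one_apply, eq_comm]

theorem maxEntOverlap_eq (d : ℕ) (σ : Matrix (Fin d × Fin d) (Fin d × Fin d) ℂ)
    (U : Matrix (Fin d) (Fin d) ℂ) :
    maxEntOverlap d σ U = (star (vec U) ⬝ᵥ σ *ᵥ vec U).re / d := by
  have hvec : ((1 : Matrix (Fin d) (Fin d) ℂ) ⊗ₖ U) *ᵥ phiME d = (1 / Real.sqrt d) • vec U := by
    rw [phiME_eq_smul_vec_one, mulVec_smul, kronecker_mulVec_vec, mul_one, transpose_one, mul_one]
  rw [maxEntOverlap, ← mulVec_mulVec, ← mulVec_mulVec, dotProduct_mulVec, ← star_mulVec, hvec,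
    star_smul, star_trivial, mulVec_smul, smul_dotProduct, dotProduct_smul, smul_smul,
    Complex.smul_re, smul_eq_mul, div_mul_div_comm, one_mul, Real.mul_self_sqrt d.cast_nonneg,
    one_div_mul_eq_div]

theorem re_star_dotProduct_mulVec_le {n : Type*} [Fintype n] (σ : Matrix n n ℂ) {w : n → ℂ}
    (hw : ∀ p, ‖w p‖ ≤ 1) : (star w ⬝ᵥ σ *ᵥ w).re ≤ ∑ p, ∑ q, ‖σ p q‖ := by
  calc (star w ⬝ᵥ σ *ᵥ w).re ≤ ‖star w ⬝ᵥ σ *ᵥ w‖ := Complex.re_le_norm _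
    _ = ‖∑ p, ∑ q, star (w p) * σ p q * w q‖ := by
        simp only [dotProduct, mulVec, Finset.mul_sum, Pi.star_apply, mul_assoc]
    _ ≤ ∑ p, ∑ q, ‖star (w p) * σ p q * w q‖ :=
        (norm_sum_le _ _).trans (Finset.sum_le_sum fun p _ => norm_sum_le _ _)
    _ ≤ ∑ p, ∑ q, ‖σ p q‖ := by
        gcongr with p _ q _
        calc ‖star (w p) * σ p q * w q‖ = ‖w p‖ * ‖σ p q‖ * ‖w q‖ := by
              rw [norm_mul, norm_mul, norm_star]
          _ ≤ 1 * ‖σ p q‖ * 1 := by gcongr <;> exact hw _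
          _ = ‖σ p q‖ := by ring

theorem bddAbove_maxEntOverlap (d : ℕ) (σ : Matrix (Fin d × Fin d) (Fin d × Fin d) ℂ) :
    BddAbove {x | ∃ U ∈ unitaryGroup (Fin d) ℂ, x = maxEntOverlap d σ U} := by
  refine ⟨(∑ p, ∑ q, ‖σ p q‖) / d, ?_⟩
  rintro _ ⟨U, hU, rfl⟩
  rw [maxEntOverlap_eq]
  gcongr
  exact re_star_dotProduct_mulVec_le σ fun p => entry_norm_bound_of_unitary hU _ _

theorem maxEntOverlap_le_fef {d : ℕ} (σ : Matrix (Fin d × Fin d) (Fin d × Fin d) ℂ)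
    {U : Matrix (Fin d) (Fin d) ℂ} (hU : U ∈ unitaryGroup (Fin d) ℂ) :
    maxEntOverlap d σ U ≤ fef d σ :=
  le_csSup (bddAbove_maxEntOverlap d σ) ⟨U, hU, rfl⟩

theorem exists_lt_maxEntOverlap_of_lt_fef {d : ℕ} {σ : Matrix (Fin d × Fin d) (Fin d × Fin d) ℂ}
    {a : ℝ} (h : a < fef d σ) : ∃ U ∈ unitaryGroup (Fin d) ℂ, a < maxEntOverlap d σ U := by
  have hne : {x | ∃ U ∈ unitaryGroup (Fin d) ℂ, x = maxEntOverlap d σ U}.Nonempty :=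
    ⟨_, 1, one_mem _, rfl⟩
  obtain ⟨_, ⟨U, hU, rfl⟩, hlt⟩ := exists_lt_of_lt_csSup hne h
  exact ⟨U, hU, hlt⟩

theorem dotProduct_mulVec_submatrix_of_injective {α β R : Type*} [Fintype α] [Fintype β]
    [NonUnitalNonAssocSemiring R] {f : α → β} (hf : Function.Injective f) {σ : Matrix β β R}
    (hσ : ∀ p q, p ∉ Set.range f ∨ q ∉ Set.range f → σ p q = 0) (x y : β → R) :
    x ⬝ᵥ σ *ᵥ y = (x ∘ f) ⬝ᵥ σ.submatrix f f *ᵥ (y ∘ f) := by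
  have hrow (a : α) : (σ.submatrix f f *ᵥ (y ∘ f)) a = (σ *ᵥ y) (f a) :=
    Fintype.sum_of_injective f hf _ _ (fun q hq => by simp [hσ _ _ (Or.inr hq)])
      fun _ => rfl
  refine (Fintype.sum_of_injective f hf _ _ (fun p hp => ?_) fun a => by simp [hrow]).symm
  rw [mulVec, dotProduct, Finset.sum_eq_zero fun q _ => by rw [hσ _ _ (Or.inl hp), zero_mul],
    mul_zero]

section Padding

variable {R : Type*} {n k : ℕ}

def padOne [Zero R] [One R] (U : Matrix (Fin n) (Fin n) R) :
    Matrix (Fin (n + k)) (Fin (n + k)) R :=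
  (fromBlocks U 0 0 1).submatrix finSumFinEquiv.symm finSumFinEquiv.symm

@[simp]
theorem padOne_apply_castAdd [Zero R] [One R] (U : Matrix (Fin n) (Fin n) R) (a b : Fin n) :
    padOne (k := k) U (Fin.castAdd k a) (Fin.castAdd k b) = U a b := by
  simp [padOne]

theorem padOne_mem_unitaryGroup [CommRing R] [StarRing R] {U : Matrix (Fin n) (Fin n) R}
    (hU : U ∈ unitaryGroup (Fin n) R) :
    padOne (k := k) U ∈ unitaryGroup (Fin (n + k)) R := by
  rw [mem_unitaryGroup_iff, star_eq_conjTranspose, padOne, conjTranspose_submatrix,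
    submatrix_mul_equiv, fromBlocks_conjTranspose, fromBlocks_multiply]
  simp [← star_eq_conjTranspose, mem_unitaryGroup_iff.mp hU, fromBlocks_one, submatrix_one_equiv]

end Padding

section Embedding

variable (k : ℕ) (ρ : Matrix (Fin 2 × Fin 2) (Fin 2 × Fin 2) ℂ)

theorem embedQubit_submatrix_castAdd :
    (embedQubit (2 + k) ρ).submatrix (Prod.map (Fin.castAdd k) (Fin.castAdd k))
      (Prod.map (Fin.castAdd k) (Fin.castAdd k)) = ρ := by
  ext p q
  exact dif_pos ⟨p.1.is_lt, p.2.is_lt, q.1.is_lt, q.2.is_lt⟩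

theorem embedQubit_eq_zero_of_notMem_range (p q : Fin (2 + k) × Fin (2 + k))
    (h : p ∉ Set.range (Prod.map (Fin.castAdd k) (Fin.castAdd k)) ∨
      q ∉ Set.range (Prod.map (Fin.castAdd k) (Fin.castAdd k))) :
    embedQubit (2 + k) ρ p q = 0 := by
  rw [embedQubit, dif_neg]
  rintro ⟨hp₁, hp₂, hq₁, hq₂⟩
  rcases h with h | h
  · exact h ⟨(⟨p.1, hp₁⟩, ⟨p.2, hp₂⟩), rfl⟩
  · exact h ⟨(⟨q.1, hq₁⟩, ⟨q.2, hq₂⟩), rfl⟩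

theorem star_vec_padOne_dotProduct_embedQubit (U : Matrix (Fin 2) (Fin 2) ℂ) :
    star (vec (padOne U)) ⬝ᵥ embedQubit (2 + k) ρ *ᵥ vec (padOne U) =
      star (vec U) ⬝ᵥ ρ *ᵥ vec U := by
  have hvec : vec (padOne U) ∘ Prod.map (Fin.castAdd k) (Fin.castAdd k) = vec U :=
    funext fun p => padOne_apply_castAdd U p.2 p.1
  rw [dotProduct_mulVec_submatrix_of_injective
    ((Fin.castAdd_injective 2 k).prodMap (Fin.castAdd_injective 2 k))
    (embedQubit_eq_zero_of_notMem_range k ρ), embedQubit_submatrix_castAdd, ← hvec]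
  rfl

theorem maxEntOverlap_embedQubit_padOne (U : Matrix (Fin 2) (Fin 2) ℂ) :
    maxEntOverlap (2 + k) (embedQubit (2 + k) ρ) (padOne U) =
      2 / ((2 + k : ℕ) : ℝ) * maxEntOverlap 2 ρ U := by
  rw [maxEntOverlap_eq, maxEntOverlap_eq, star_vec_padOne_dotProduct_embedQubit]
  field_simp
  norm_num

end Embedding

theorem fef_embed_gt_general (d : ℕ) (hd : 2 < d) (ρ : Matrix (Fin 2 × Fin 2) (Fin 2 × Fin 2) ℂ)
    (hF : 1 / 2 < fef 2 ρ) :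
    1 / (d : ℝ) < fef d (embedQubit d ρ) := by
  obtain ⟨k, rfl⟩ := Nat.exists_eq_add_of_le hd.le
  obtain ⟨U, hU, hlt⟩ := exists_lt_maxEntOverlap_of_lt_fef hF
  calc 1 / ((2 + k : ℕ) : ℝ) = 2 / ((2 + k : ℕ) : ℝ) * (1 / 2) := by ring
    _ < 2 / ((2 + k : ℕ) : ℝ) * maxEntOverlap 2 ρ U := by gcongr
    _ = maxEntOverlap (2 + k) (embedQubit (2 + k) ρ) (padOne U) :=
      (maxEntOverlap_embedQubit_padOne k ρ U).symm
    _ ≤ fef (2 + k) (embedQubit (2 + k) ρ) :=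
      maxEntOverlap_le_fef _ (padOne_mem_unitaryGroup hU)

/-- If a two-qubit state `ρ` has fully-entangled fraction `F₂(ρ) > 1/2`, then for every
integer `d > 2` its embedding into `ℂ^d ⊗ ℂ^d` has fully-entangled fraction `F_d > 1/d`. -/
theorem fef_embed_gt (d : ℕ) (hd : 2 < d) (ρ : Matrix (Fin 2 × Fin 2) (Fin 2 × Fin 2) ℂ)
    (hρ : ρ.PosSemidef) (htr : Matrix.trace ρ = 1) (hF : 1 / 2 < fef 2 ρ) :
    1 / (d : ℝ) < fef d (embedQubit d ρ) :=
  fef_embed_gt_general d hd ρ hF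
end
end

section
/- For the d-dimensional Werner state, δ[W^(d)(v)] := log₂ d + v·log₂(2v/(d(d+1))) + (1−v)·log₂(2(1−v)/(d(d−1))) is strictly negative for all integers d ≥ 3 and all v ∈ (0,1); hence no two-qudit Werner state with d ≥ 3 is useful for dense coding. -/
/-!
Splitting `log₂ d = S(ρ_B)` as `v log₂ d + (1 - v) log₂ d` and absorbing it into the two
logarithms leaves `δ = v log₂ (2v / (d + 1)) + (1 - v) log₂ (2(1 - v) / (d - 1))`. Both arguments
lie in `(0, 1)`: `2v < 2 < d + 1`, and `2(1 - v) < 2 ≤ d - 1` exactly when `d ≥ 3`.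
-/

open Real

lemma Real.logb_add_logb_div_mul_cancel_left {b x y z : ℝ} (hx : x ≠ 0) (hy : y ≠ 0)
    (hz : z ≠ 0) : logb b x + logb b (y / (x * z)) = logb b (y / z) := by
  rw [← logb_mul hx (div_ne_zero hy (mul_ne_zero hx hz))]
  congr 1
  field_simp

lemma Real.mul_logb_div_neg {b v x y : ℝ} (hb : 1 < b) (hv : 0 < v) (hx : 0 < x) (hxy : x < y) :
    v * logb b (x / y) < 0 :=
  mul_neg_of_pos_of_neg hv <|
    logb_neg hb (div_pos hx (hx.trans hxy)) ((div_lt_one (hx.trans hxy)).2 hxy)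

/-- For all integers `d ≥ 3` and all `v ∈ (0,1)`,
`δ[W^(d)(v)] = log₂ d + v log₂(2v/(d(d+1))) + (1-v) log₂(2(1-v)/(d(d-1))) < 0`;
hence no two-qudit Werner state with `d ≥ 3` is useful for dense coding. -/
theorem werner_not_dense_codable (d : ℕ) (hd : 3 ≤ d) (v : ℝ) (hv : v ∈ Set.Ioo (0 : ℝ) 1) :
    Real.logb 2 d + v * Real.logb 2 (2 * v / ((d : ℝ) * ((d : ℝ) + 1))) +
      (1 - v) * Real.logb 2 (2 * (1 - v) / ((d : ℝ) * ((d : ℝ) - 1))) < 0 := by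
  obtain ⟨hv0, hv1⟩ := hv
  have hd3 : (3 : ℝ) ≤ d := by exact_mod_cast hd
  have hd0 : (d : ℝ) ≠ 0 := by positivity
  calc Real.logb 2 d + v * Real.logb 2 (2 * v / ((d : ℝ) * ((d : ℝ) + 1))) +
        (1 - v) * Real.logb 2 (2 * (1 - v) / ((d : ℝ) * ((d : ℝ) - 1)))
      = v * (logb 2 d + logb 2 (2 * v / (d * (d + 1)))) +
          (1 - v) * (logb 2 d + logb 2 (2 * (1 - v) / (d * (d - 1)))) := by ring
    _ = v * logb 2 (2 * v / (d + 1)) + (1 - v) * logb 2 (2 * (1 - v) / (d - 1)) := by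
      rw [logb_add_logb_div_mul_cancel_left hd0 (by positivity) (by positivity),
        logb_add_logb_div_mul_cancel_left hd0 (by linarith) (by linarith)]
    _ < 0 := add_neg (mul_logb_div_neg one_lt_two hv0 (by positivity) (by linarith))
      (mul_logb_div_neg one_lt_two (by linarith) (by linarith) (by linarith))
end
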